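/- Every elliptic curve over the finite field 𝔽_2 has at least 1 and at most 5 rational points. -/
import Mathlib


/-- Every elliptic curve over `𝔽₂` has at least `1` and at most `5` rational points. -/
theorem stmt_13 (W : WeierstrassCurve (ZMod 2)) [W.IsElliptic] :
    1 ≤ Nat.card W.toAffine.Point ∧ Nat.card W.toAffine.Point ≤ 5 := by
  classical
  let f : W.toAffine.Point → Option (ZMod 2 × ZMod 2) := fun P =>
    match P with
    | .zero => none
    | @WeierstrassCurve.Affine.Point.some _ _ _ x y _ => some (x, y)
  have hf : Function.Injective f := by
    intro P Q h
    cases P <;> cases Q <;> simp_all [f]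
  have hfin : Finite W.toAffine.Point := Finite.of_injective f hf
  have hne : Nonempty W.toAffine.Point := ⟨.zero⟩
  refine ⟨Nat.one_le_iff_ne_zero.mpr (Nat.card_pos).ne', ?_⟩
  calc Nat.card W.toAffine.Point ≤ Nat.card (Option (ZMod 2 × ZMod 2)) :=
        Nat.card_le_card_of_injective f hf
    _ = 5 := by simp [Nat.card_eq_fintype_card]
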